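/- For all real numbers a, b and every real number c ≥ 0, the integral of (a − b·e^{−cξ})·ξ^{1/2}/(1+e^{ξ}) over ξ from 0 to ∞ equals Γ(3/2)·[a·(1−2^{−1/2})·ζ(3/2) − b·(2^{−1/2}·ζ(3/2, (c+1)/2) − ζ(3/2, c+1))], where ζ(s) is the Riemann zeta function and ζ(s, q) the Hurwitz zeta function. -/

import Mathlib

/-!
Expanding `1 / (1 + e^ξ) = Σ_{n ≥ 0} (-1)^n e^{-(n+1)ξ}` and integrating term by term (a Mellin
transform of a Dirichlet series), `∫₀^∞ ξ^{s-1} e^{-cξ} / (1 + e^ξ) dξ` becomes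
`Γ(s) Σ_{n ≥ 0} (-1)^n (n + q)^{-s}` with `q = c + 1`. Splitting this alternating series, and
`ζ(s, q)` itself, into even and odd indices expresses both through `ζ(s, q/2)` and `ζ(s, (q+1)/2)`;
eliminating the odd part gives `2^{1-s} ζ(s, q/2) - ζ(s, q)`, and eliminating the even part at
`q = 1` gives `(1 - 2^{1-s}) ζ(s)`.
-/

/-- The Hurwitz zeta function for real s > 1 and q > 0, defined by its series
ζ(s, q) = Σ_{n=0}^∞ (n+q)^{−s}. -/
noncomputable def hurwitzZetaReal (s q : ℝ) : ℝ := ∑' n : ℕ, 1 / ((n : ℝ) + q) ^ s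

open Real MeasureTheory Set

theorem HasSum.even_sub_odd {α : Type*} [Ring α] [TopologicalSpace α] [IsTopologicalAddGroup α]
    {f : ℕ → α} {e o : α} (he : HasSum (fun k ↦ f (2 * k)) e)
    (ho : HasSum (fun k ↦ f (2 * k + 1)) o) : HasSum (fun n ↦ (-1) ^ n * f n) (e - o) := by
  rw [sub_eq_add_neg]
  refine HasSum.even_add_odd ?_ ?_
  · simpa [pow_mul] using he
  · simpa [pow_succ, pow_mul] using ho.neg

section HurwitzZeta

variable {s : ℝ}

theorem hasSum_hurwitzZetaReal (hs : 1 < s) {q : ℝ} (hq : 0 ≤ q) :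
    HasSum (fun n : ℕ ↦ 1 / ((n : ℝ) + q) ^ s) (hurwitzZetaReal s q) := by
  refine Summable.hasSum (((summable_one_div_nat_add_rpow q s).mpr hs).congr fun n ↦ ?_)
  rw [abs_of_nonneg (by positivity)]

theorem hasSum_one_div_two_mul_add_rpow (hs : 1 < s) {p : ℝ} (hp : 0 ≤ p) :
    HasSum (fun k : ℕ ↦ 1 / (2 * (k : ℝ) + p) ^ s) (2 ^ (-s) * hurwitzZetaReal s (p / 2)) := by
  refine ((hasSum_hurwitzZetaReal hs (by positivity)).mul_left (2 ^ (-s))).congr_fun fun k ↦ ?_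
  rw [show 2 * (k : ℝ) + p = 2 * (k + p / 2) by ring, mul_rpow zero_le_two (by positivity),
    rpow_neg zero_le_two]
  field_simp

theorem hasSum_neg_one_pow_div_nat_add_rpow (hs : 1 < s) {q : ℝ} (hq : 0 ≤ q) :
    HasSum (fun n : ℕ ↦ (-1) ^ n / ((n : ℝ) + q) ^ s)
      (2 ^ (-s) * hurwitzZetaReal s (q / 2) - 2 ^ (-s) * hurwitzZetaReal s ((q + 1) / 2)) := by
  simp_rw [div_eq_mul_one_div ((-1 : ℝ) ^ _)]
  refine HasSum.even_sub_odd ?_ ?_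
  · simpa using hasSum_one_div_two_mul_add_rpow hs hq
  · simpa [add_assoc, add_comm (1 : ℝ) q] using
      hasSum_one_div_two_mul_add_rpow hs (by positivity : 0 ≤ q + 1)

theorem hurwitzZetaReal_eq_even_add_odd (hs : 1 < s) {q : ℝ} (hq : 0 ≤ q) :
    hurwitzZetaReal s q =
      2 ^ (-s) * hurwitzZetaReal s (q / 2) + 2 ^ (-s) * hurwitzZetaReal s ((q + 1) / 2) := by
  refine (hasSum_hurwitzZetaReal hs hq).unique (HasSum.even_add_odd ?_ ?_)
  · simpa using hasSum_one_div_two_mul_add_rpow hs hq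
  · simpa [add_assoc, add_comm (1 : ℝ) q] using
      hasSum_one_div_two_mul_add_rpow hs (by positivity : 0 ≤ q + 1)

theorem tsum_neg_one_pow_div_nat_add_rpow (hs : 1 < s) {q : ℝ} (hq : 0 ≤ q) :
    ∑' n : ℕ, (-1) ^ n / ((n : ℝ) + q) ^ s =
      2 ^ (1 - s) * hurwitzZetaReal s (q / 2) - hurwitzZetaReal s q := by
  rw [(hasSum_neg_one_pow_div_nat_add_rpow hs hq).tsum_eq, hurwitzZetaReal_eq_even_add_odd hs hq,
    sub_eq_add_neg 1 s, rpow_add two_pos, rpow_one]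
  ring

theorem tsum_neg_one_pow_div_nat_add_one_rpow (hs : 1 < s) :
    ∑' n : ℕ, (-1) ^ n / ((n : ℝ) + 1) ^ s = (1 - 2 ^ (1 - s)) * hurwitzZetaReal s 1 := by
  have hsplit := hurwitzZetaReal_eq_even_add_odd hs zero_le_one
  rw [(hasSum_neg_one_pow_div_nat_add_rpow hs zero_le_one).tsum_eq,
    sub_eq_add_neg 1 s, rpow_add two_pos, rpow_one]
  norm_num at hsplit ⊢
  linear_combination -hsplit

theorem ofReal_hurwitzZetaReal_one (hs : 1 < s) : (hurwitzZetaReal s 1 : ℂ) = riemannZeta s := by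
  rw [zeta_eq_tsum_one_div_nat_add_one_cpow (by simpa using hs), hurwitzZetaReal,
    Complex.ofReal_tsum]
  congr 1 with n
  push_cast [Complex.ofReal_cpow (by positivity : (0 : ℝ) ≤ n + 1)]
  rfl

end HurwitzZeta

theorem hasSum_neg_one_pow_mul_exp (c : ℝ) {ξ : ℝ} (hξ : 0 < ξ) :
    HasSum (fun n : ℕ ↦ (-1) ^ n * exp (-(n + (c + 1)) * ξ)) (exp (-c * ξ) / (1 + exp ξ)) := by
  have hr : ‖-exp (-ξ)‖ < 1 := by simpa using hξ
  have hsum : exp (-c * ξ) / (1 + exp ξ) = exp (-(c + 1) * ξ) * (1 - -exp (-ξ))⁻¹ := by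
    rw [sub_neg_eq_add, ← div_eq_mul_inv, div_eq_div_iff (by positivity) (by positivity),
      mul_add, mul_add, mul_one, mul_one, ← exp_add, ← exp_add]
    ring_nf
  rw [hsum]
  refine ((hasSum_geometric_of_norm_lt_one hr).mul_left _).congr_fun fun n ↦ ?_
  rw [neg_pow (exp (-ξ)), ← exp_nat_mul, mul_left_comm, ← exp_add]
  congr 2
  ring

section FermiDiracIntegral

variable {s c : ℝ}

theorem integrableOn_rpow_mul_exp_neg_mul_div_one_add_exp (hs : 0 < s) (hc : -1 < c) :
    IntegrableOn (fun ξ ↦ ξ ^ (s - 1) * exp (-c * ξ) / (1 + exp ξ)) (Ioi 0) := by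
  have hdom : IntegrableOn (fun ξ ↦ ξ ^ (s - 1) * exp (-(c + 1) * ξ ^ (1 : ℝ))) (Ioi 0) :=
    integrableOn_rpow_mul_exp_neg_mul_rpow (by linarith) one_pos (by linarith)
  refine hdom.mono' ?_ ?_
  · refine ContinuousOn.aestronglyMeasurable ?_ measurableSet_Ioi
    exact .div (fun ξ hξ ↦ by fun_prop (disch := exact Or.inl (ne_of_gt hξ))) (by fun_prop)
      fun ξ _ ↦ by positivity
  · filter_upwards [ae_restrict_mem measurableSet_Ioi] with ξ (hξ : 0 < ξ)
    have hexp : exp (-(c + 1) * ξ) * exp ξ = exp (-c * ξ) := by rw [← exp_add]; ring_nf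
    rw [rpow_one, norm_of_nonneg (by positivity), div_le_iff₀ (by positivity), mul_assoc]
    refine mul_le_mul_of_nonneg_left ?_ (by positivity)
    linarith [exp_pos (-(c + 1) * ξ)]

theorem integral_rpow_mul_exp_neg_mul_div_one_add_exp (hs : 1 < s) (hc : -1 < c) :
    ∫ ξ in Ioi 0, ξ ^ (s - 1) * exp (-c * ξ) / (1 + exp ξ) =
      Gamma s * ∑' n : ℕ, (-1) ^ n / ((n : ℝ) + (c + 1)) ^ s := by
  have hp (n : ℕ) : 0 < (n : ℝ) + (c + 1) := by linarith [n.cast_nonneg (α := ℝ)]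
  have hF (ξ : ℝ) (hξ : ξ ∈ Ioi 0) :
      HasSum (fun n : ℕ ↦ ((-1) ^ n : ℂ) * (exp (-((n : ℝ) + (c + 1)) * ξ) : ℝ))
        ((exp (-c * ξ) / (1 + exp ξ) : ℝ) : ℂ) := by
    exact_mod_cast Complex.hasSum_ofReal.mpr (hasSum_neg_one_pow_mul_exp c hξ)
  have hsum : Summable fun n : ℕ ↦ ‖((-1) ^ n : ℂ)‖ / ((n : ℝ) + (c + 1)) ^ (s : ℂ).re := by
    simpa using (hasSum_hurwitzZetaReal hs (by linarith : 0 ≤ c + 1)).summable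
  have hmellin :=
    hasSum_mellin (fun n ↦ .inr (hp n)) (by simpa using hs.trans' zero_lt_one) hF hsum
  have hint : mellin (fun ξ ↦ ((exp (-c * ξ) / (1 + exp ξ) : ℝ) : ℂ)) s =
      ((∫ ξ in Ioi 0, ξ ^ (s - 1) * exp (-c * ξ) / (1 + exp ξ) : ℝ) : ℂ) := by
    rw [mellin, ← integral_complex_ofReal]
    refine setIntegral_congr_fun measurableSet_Ioi fun ξ (hξ : 0 < ξ) ↦ ?_
    push_cast [smul_eq_mul, mul_div_assoc, Complex.ofReal_cpow hξ.le]
    rfl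
  have hterm (n : ℕ) : Complex.Gamma s * (-1) ^ n / (((n : ℝ) + (c + 1) : ℝ) : ℂ) ^ (s : ℂ) =
      ((Gamma s * ((-1) ^ n / ((n : ℝ) + (c + 1)) ^ s) : ℝ) : ℂ) := by
    rw [Complex.ofReal_mul, Complex.ofReal_div, Complex.ofReal_cpow (hp n).le,
      Complex.Gamma_ofReal]
    push_cast
    ring
  simp_rw [hint, hterm, Complex.hasSum_ofReal] at hmellin
  rw [← hmellin.tsum_eq, tsum_mul_left]

end FermiDiracIntegral

/-- for real a, b and real c ≥ 0,
∫_0^∞ (a − b·e^{−cξ})·ξ^{1/2}/(1+e^ξ) dξ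
  = Γ(3/2)·[a·(1−2^{−1/2})·ζ(3/2) − b·(2^{−1/2}·ζ(3/2,(c+1)/2) − ζ(3/2,c+1))]. -/
theorem fermiDirac_half_model (a b c : ℝ) (hc : 0 ≤ c) :
    ((∫ ξ in Set.Ioi (0 : ℝ),
        (a - b * Real.exp (-c * ξ)) * ξ ^ ((1 : ℝ) / 2) / (1 + Real.exp ξ) : ℝ) : ℂ) =
      (Real.Gamma (3 / 2) : ℂ) *
        ((a : ℂ) * (1 - ((2 : ℝ) ^ (-(1 : ℝ) / 2) : ℝ)) * riemannZeta (3 / 2) -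
          (b : ℂ) * (((2 : ℝ) ^ (-(1 : ℝ) / 2) : ℝ) *
              (hurwitzZetaReal (3 / 2) ((c + 1) / 2) : ℂ) -
            (hurwitzZetaReal (3 / 2) (c + 1) : ℂ))) := by
  have hs : (1 : ℝ) < 3 / 2 := by norm_num
  have hc' : (-1 : ℝ) < c := by linarith
  let I (d : ℝ) := ∫ ξ in Ioi 0, ξ ^ ((3 / 2 : ℝ) - 1) * exp (-d * ξ) / (1 + exp ξ)
  have hsplit : ∫ ξ in Ioi 0, (a - b * exp (-c * ξ)) * ξ ^ ((1 : ℝ) / 2) / (1 + exp ξ) =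
      a * I 0 - b * I c := by
    rw [← integral_const_mul, ← integral_const_mul, ← integral_sub
      ((integrableOn_rpow_mul_exp_neg_mul_div_one_add_exp (by norm_num) (by norm_num)).const_mul a)
      ((integrableOn_rpow_mul_exp_neg_mul_div_one_add_exp (by norm_num) hc').const_mul b)]
    refine setIntegral_congr_fun measurableSet_Ioi fun ξ _ ↦ ?_
    norm_num
    ring
  simp only [hsplit, I]
  rw [integral_rpow_mul_exp_neg_mul_div_one_add_exp hs (by norm_num),
    integral_rpow_mul_exp_neg_mul_div_one_add_exp hs hc', zero_add,
    tsum_neg_one_pow_div_nat_add_one_rpow hs, tsum_neg_one_pow_div_nat_add_rpow hs (by linarith)]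
  have hζ := ofReal_hurwitzZetaReal_one hs
  push_cast at hζ ⊢
  rw [← hζ]
  norm_num
  ring
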